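/- arXiv:1806.00330 — 2 statements merged into one kernel-verified Lean document; each statement's English description precedes it below -/
import Mathlib

section
/- For all natural numbers m, n ≥ 1, the matching number of the fractional power P_k^{m/n} (the m-th power of the n-subdivision of the path P_k) equals the matching number of the n-subdivision P_k^{1/n}, namely floor((nk−n+1)/2). -/
open SimpleGraph

/-- The matching number: maximum size of a matching. -/
noncomputable def matchingNumber {V : Type*} (G : SimpleGraph V) : ℕ :=
  sSup {n | ∃ M : G.Subgraph, M.IsMatching ∧ M.edgeSet.ncard = n}

/-- The `m`-th distance power of a graph. -/
def graphPow {V : Type*} (G : SimpleGraph V) (m : ℕ) : SimpleGraph V where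
  Adj x y := x ≠ y ∧ G.dist x y ≤ m
  symm := ⟨fun x y ⟨h1, h2⟩ => ⟨h1.symm, by rwa [SimpleGraph.dist_comm]⟩⟩
  loopless := ⟨fun x h => h.1 rfl⟩

/-- The `n`-subdivision of a graph: each edge `xy` (with `x < y`) is replaced by a
path `x, (xy)_1, …, (xy)_{n-1}, y` of length `n`. -/
def subdivision {V : Type*} [LinearOrder V] (G : SimpleGraph V) (n : ℕ) :
    SimpleGraph (V ⊕ ({e : V × V // e.1 < e.2 ∧ G.Adj e.1 e.2} × Fin (n - 1))) where
  Adj u v :=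
    match u, v with
    | .inl x, .inl y => n = 1 ∧ G.Adj x y
    | .inl x, .inr (e, i) => (i.val = 0 ∧ e.val.1 = x) ∨ (i.val = n - 2 ∧ e.val.2 = x)
    | .inr (e, i), .inl x => (i.val = 0 ∧ e.val.1 = x) ∨ (i.val = n - 2 ∧ e.val.2 = x)
    | .inr (e, i), .inr (f, j) => e = f ∧ (i.val + 1 = j.val ∨ j.val + 1 = i.val)
  symm := by
    constructor
    rintro (x | ⟨e, i⟩) (y | ⟨f, j⟩) h
    · exact ⟨h.1, h.2.symm⟩
    · exact h
    · exact h
    · exact ⟨h.1.symm, h.2.symm⟩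
  loopless := by
    constructor
    rintro (x | ⟨e, i⟩) h
    · exact G.loopless.irrefl x h.2
    · rcases h with ⟨-, h | h⟩ <;> omega

/-- A matching is maximal if it cannot be extended to a larger matching. -/
def IsMaximalMatching {V : Type*} {G : SimpleGraph V} (M : G.Subgraph) : Prop :=
  M.IsMatching ∧
    ∀ M' : G.Subgraph, M'.IsMatching → M.edgeSet ⊆ M'.edgeSet → M.edgeSet = M'.edgeSet

/-- The saturation number: minimum size of a maximal matching. -/
noncomputable def satNumber {V : Type*} (G : SimpleGraph V) : ℕ :=
  sInf {n | ∃ M : G.Subgraph, IsMaximalMatching M ∧ M.edgeSet.ncard = n}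

/-- The friendship graph `F_k`: `k` triangles sharing the common vertex `0`;
the `i`-th triangle has vertices `0, 2i+1, 2i+2`. -/
def friendshipGraph (k : ℕ) : SimpleGraph (Fin (2 * k + 1)) :=
  SimpleGraph.fromRel (fun x y => x.val = 0 ∨ (x.val + 1 = y.val ∧ y.val % 2 = 0))

/-- The chain triangular cactus `T_k`: `k` triangles in a chain, the `i`-th triangle
having vertices `2i, 2i+1, 2i+2` and sharing cut-vertices with its neighbours. -/
def chainTriangularCactus (k : ℕ) : SimpleGraph (Fin (2 * k + 1)) :=
  SimpleGraph.fromRel (fun x y => y.val = x.val + 1 ∨ (y.val = x.val + 2 ∧ x.val % 2 = 0))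

/-- The complete bipartite graph `K_{m,n}` on `Fin (m+n)`, with parts
`{0,…,m-1}` and `{m,…,m+n-1}`. -/
def completeBipartite (m n : ℕ) : SimpleGraph (Fin (m + n)) :=
  SimpleGraph.fromRel (fun x y => x.val < m ∧ m ≤ y.val)

/-!
The `n`-subdivision of `P_k` is again a path, on `N = n (k - 1) + 1` vertices, so it and all of
its powers contain a Hamiltonian path. A graph on `N` vertices with a Hamiltonian path has
matching number exactly `⌊N / 2⌋`: a matching covers twice as many vertices as it has edges, and
the pairs `{2i, 2i + 1}` of consecutive path vertices form a matching of that size.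
-/

open Function

namespace SimpleGraph

variable {V : Type*} {G : SimpleGraph V}

theorem Subgraph.IsMatching.ncard_verts [Finite V] {M : G.Subgraph} (hM : M.IsMatching) :
    M.verts.ncard = 2 * M.edgeSet.ncard := by
  classical
  have : Fintype V := Fintype.ofFinite V
  have hdeg : Fintype.card M.verts = 2 * M.coe.edgeFinset.card := by
    rw [← M.coe.sum_degrees_eq_twice_card_edges, ← Finset.card_univ, Finset.card_eq_sum_ones]
    refine Finset.sum_congr rfl fun v _ => ?_
    rw [Subgraph.coe_degree, Subgraph.degree_eq_one_iff_existsUnique_adj.mpr (hM v.2)]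
  rw [Set.ncard_eq_toFinset_card', Set.toFinset_card, hdeg, ← M.image_coe_edgeSet_coe,
    Set.ncard_image_of_injective _ (Sym2.map.injective Subtype.val_injective),
    Set.ncard_eq_toFinset_card']
  simp [edgeFinset]

theorem Subgraph.IsMatching.ncard_edgeSet_le [Finite V] {M : G.Subgraph} (hM : M.IsMatching) :
    M.edgeSet.ncard ≤ Nat.card V / 2 := by
  have := Set.ncard_le_card M.verts
  have := hM.ncard_verts
  omega

def pathGraph.pairMatching (N : ℕ) : (pathGraph N).Subgraph where
  verts := {v | v.val < 2 * (N / 2)}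
  Adj a b := a.val / 2 = b.val / 2 ∧ a ≠ b ∧ a.val < 2 * (N / 2) ∧ b.val < 2 * (N / 2)
  adj_sub := by
    rintro a b ⟨hab, hne, -, -⟩
    have : a.val ≠ b.val := Fin.val_ne_of_ne hne
    rw [pathGraph_adj]
    omega
  edge_vert := fun h => h.2.2.1
  symm := ⟨fun _ _ ⟨hab, hne, ha, hb⟩ => ⟨hab.symm, hne.symm, hb, ha⟩⟩

theorem pathGraph.pairMatching_isMatching (N : ℕ) : (pathGraph.pairMatching N).IsMatching := by
  intro v hv
  replace hv : v.val < 2 * (N / 2) := hv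
  refine ⟨⟨2 * (v.val / 2) + (1 - v.val % 2), by omega⟩,
    ⟨by simp only; omega, fun h => ?_, hv, by simp only; omega⟩, ?_⟩
  · have := congrArg Fin.val h
    simp only at this
    omega
  · rintro w ⟨hvw, hne, -, -⟩
    have : w.val ≠ v.val := Fin.val_ne_of_ne hne.symm
    ext
    simp only
    omega

theorem pathGraph.pairMatching_ncard_verts (N : ℕ) :
    (pathGraph.pairMatching N).verts.ncard = 2 * (N / 2) := by
  have hle : 2 * (N / 2) ≤ N := Nat.mul_div_le N 2
  have : (pathGraph.pairMatching N).verts = Set.range (Fin.castLE hle) := by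
    ext v
    exact ⟨fun hv => ⟨⟨v.val, hv⟩, rfl⟩, by rintro ⟨a, rfl⟩; exact (a.isLt : _)⟩
  rw [this, ← Set.image_univ, Set.ncard_image_of_injective _ (Fin.castLE_injective hle),
    Set.ncard_univ, Nat.card_eq_fintype_card, Fintype.card_fin]

theorem matchingNumber_eq_of_injective_hom_pathGraph [Finite V] {N : ℕ} (hV : Nat.card V = N)
    (f : pathGraph N →g G) (hf : Injective f) : matchingNumber G = N / 2 := by
  refine IsGreatest.csSup_eq ⟨⟨_, (pathGraph.pairMatching_isMatching N).map f hf, ?_⟩, ?_⟩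
  · have := ((pathGraph.pairMatching_isMatching N).map f hf).ncard_verts
    rw [Subgraph.map_verts, Set.ncard_image_of_injective _ hf,
      pathGraph.pairMatching_ncard_verts] at this
    omega
  · rintro _ ⟨M, hM, rfl⟩
    exact hV ▸ hM.ncard_edgeSet_le

theorem le_graphPow {m : ℕ} (hm : 1 ≤ m) : G ≤ graphPow G m :=
  fun _ _ h => ⟨h.ne, (dist_le h.toWalk).trans (by simpa using hm)⟩

end SimpleGraph

section PathSubdivision

variable {k n : ℕ}

abbrev PathEdge (k : ℕ) := {e : Fin k × Fin k // e.1 < e.2 ∧ (pathGraph k).Adj e.1 e.2}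

def pathEdgeEquiv (k : ℕ) : PathEdge k ≃ Fin (k - 1) where
  toFun e := ⟨e.val.1.val, by
    have := e.val.2.isLt
    have := e.2.1
    omega⟩
  invFun i := ⟨(⟨i.val, by omega⟩, ⟨i.val + 1, by omega⟩), Fin.lt_def.mpr (Nat.lt_succ_self _),
    pathGraph_adj.mpr (Or.inl rfl)⟩
  left_inv := by
    rintro ⟨⟨a, b⟩, hab, hadj⟩
    rw [pathGraph_adj] at hadj
    have : a.val + 1 = b.val := by simp only [Fin.lt_def] at hab hadj; omega
    exact Subtype.ext (Prod.ext rfl (Fin.ext this))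
  right_inv _ := rfl

theorem card_subdivision_pathGraph (hk : 1 ≤ k) (hn : 1 ≤ n) :
    Nat.card (Fin k ⊕ (PathEdge k × Fin (n - 1))) = n * (k - 1) + 1 := by
  rw [Nat.card_sum, Nat.card_prod, Nat.card_congr (pathEdgeEquiv k)]
  simp only [Nat.card_eq_fintype_card, Fintype.card_fin]
  obtain ⟨k, rfl⟩ := Nat.exists_eq_add_of_le' hk
  obtain ⟨n, rfl⟩ := Nat.exists_eq_add_of_le' hn
  simp only [Nat.add_sub_cancel]
  ring

/-- The `p`-th vertex along the `n`-subdivision of `pathGraph k`: writing `p = n q + r` with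
`r < n`, it is the original vertex `q` if `r = 0`, and otherwise the `r`-th inner vertex of
the edge `q(q+1)`. -/
def subdivisionPathVertex (hk : 1 ≤ k) (hn : 1 ≤ n) (p : Fin (n * (k - 1) + 1)) :
    Fin k ⊕ (PathEdge k × Fin (n - 1)) :=
  if hr : p.val % n = 0 then
    .inl ⟨p.val / n, by
      have := Nat.div_le_div_right (c := n) (Nat.le_of_lt_succ p.isLt)
      rw [Nat.mul_div_cancel_left _ hn] at this
      omega⟩
  else
    .inr ((pathEdgeEquiv k).symm ⟨p.val / n, by
      have hp := Nat.div_add_mod p.val n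
      have hp' := Nat.le_of_lt_succ p.isLt
      by_contra! h
      have := Nat.mul_le_mul_left n h
      omega⟩,
      ⟨p.val % n - 1, by have := Nat.mod_lt p.val hn; omega⟩)

def subdivisionPathIndex : Fin k ⊕ (PathEdge k × Fin (n - 1)) → ℕ
  | .inl x => n * x.val
  | .inr (e, i) => n * e.val.1.val + i.val + 1

theorem subdivisionPathIndex_vertex (hk : 1 ≤ k) (hn : 1 ≤ n) (p : Fin (n * (k - 1) + 1)) :
    subdivisionPathIndex (subdivisionPathVertex hk hn p) = p.val := by
  have := Nat.div_add_mod p.val n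
  unfold subdivisionPathVertex
  split <;> simp only [subdivisionPathIndex, pathEdgeEquiv, Equiv.coe_fn_symm_mk] <;> omega

theorem subdivisionPathVertex_injective (hk : 1 ≤ k) (hn : 1 ≤ n) :
    Injective (subdivisionPathVertex hk hn) := fun p q h =>
  Fin.ext (by simpa only [subdivisionPathIndex_vertex] using congrArg subdivisionPathIndex h)

theorem subdivision_adj_subdivisionPathVertex (hk : 1 ≤ k) (hn : 1 ≤ n)
    {p q : Fin (n * (k - 1) + 1)} (hpq : p.val + 1 = q.val) :
    (subdivision (pathGraph k) n).Adj (subdivisionPathVertex hk hn p)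
      (subdivisionPathVertex hk hn q) := by
  have hp := Nat.div_add_mod p.val n
  have hr := Nat.mod_lt p.val hn
  have hq : (q.val / n = p.val / n ∧ q.val % n = p.val % n + 1) ∨
      (q.val / n = p.val / n + 1 ∧ q.val % n = 0 ∧ p.val % n + 1 = n) := by
    rcases Nat.lt_or_ge (p.val % n + 1) n with h | h
    · exact .inl ((Nat.div_mod_unique hn).mpr ⟨by omega, h⟩)
    · have : q.val / n = p.val / n + 1 ∧ q.val % n = 0 :=
        (Nat.div_mod_unique hn).mpr ⟨by rw [Nat.mul_succ]; omega, hn⟩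
      exact .inr ⟨this.1, this.2, by omega⟩
  unfold subdivisionPathVertex
  rcases hq with ⟨hd, hm⟩ | ⟨hd, hm, hpn⟩ <;> by_cases hp0 : p.val % n = 0 <;>
    simp only [hd, hm, hp0, Nat.add_one_ne_zero, dite_true, dite_false]
  · exact .inl ⟨rfl, rfl⟩
  · exact ⟨rfl, .inl (by simp only; omega)⟩
  · exact ⟨by omega, pathGraph_adj.mpr (.inl rfl)⟩
  · exact .inr ⟨by simp only; omega, rfl⟩

def subdivisionPathHom (hk : 1 ≤ k) (hn : 1 ≤ n) :
    pathGraph (n * (k - 1) + 1) →g subdivision (pathGraph k) n where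
  toFun := subdivisionPathVertex hk hn
  map_rel' h := by
    rcases pathGraph_adj.mp h with h | h
    · exact subdivision_adj_subdivisionPathVertex hk hn h
    · exact (subdivision_adj_subdivisionPathVertex hk hn h).symm

end PathSubdivision

theorem stmt5 (k m n : ℕ) (hk : 1 ≤ k) (hm : 1 ≤ m) (hn : 1 ≤ n) :
    matchingNumber (graphPow (subdivision (pathGraph k) n) m)
      = matchingNumber (subdivision (pathGraph k) n) ∧
    matchingNumber (graphPow (subdivision (pathGraph k) n) m) = (n * k - n + 1) / 2 := by
  have hcard := card_subdivision_pathGraph hk hn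
  have hinj := subdivisionPathVertex_injective hk hn
  have hsub : matchingNumber (subdivision (pathGraph k) n) = (n * (k - 1) + 1) / 2 :=
    matchingNumber_eq_of_injective_hom_pathGraph hcard (subdivisionPathHom hk hn) hinj
  have hpow :
      matchingNumber (graphPow (subdivision (pathGraph k) n) m) = (n * (k - 1) + 1) / 2 :=
    matchingNumber_eq_of_injective_hom_pathGraph hcard
      ((Hom.ofLE (le_graphPow hm)).comp (subdivisionPathHom hk hn)) hinj
  rw [hpow, hsub, Nat.mul_sub_one]
  exact ⟨rfl, rfl⟩
end

section
/- For odd k and n > m, the matching number of the k-subdivision of K_{m,n} equals m(k+1)/2 + m(m−1)(k−1)/2 + m(n−m)·floor(k/2). -/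
/-!
For odd `k`, the path of length `k` that replaces an edge of `G` contains at most
`(k + 1) / 2` edges of a matching `M` of the subdivision, and at most `k / 2` unless both of
its end edges lie in `M`. The edges of `G` whose paths have both end edges in `M` share no
endpoint, since `M` covers each such endpoint by that end edge; so they form a matching of
`G`, and `α'(G^{1/k}) ≤ |E(G)| ⌊k/2⌋ + α'(G)`. Conversely a matching `D` of `G` lifts to the
subdivision by taking the edges at even positions on the paths of edges of `D` (these include
both end edges) and the edges at odd positions on all other paths (these avoid both ends).
Hence `α'(G^{1/k}) = |E(G)| ⌊k/2⌋ + α'(G)`, and for `K_{m,n}` with `m ≤ n` this is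
`mn ⌊k/2⌋ + m`.
-/

open SimpleGraph

open Finset

lemma Finset.card_le_half_of_succ_notMem {S : Finset ℕ} {a b : ℕ}
    (hS : ∀ i ∈ S, a ≤ i ∧ i < b) (hgap : ∀ i ∈ S, i + 1 ∉ S) :
    #S ≤ (b - a + 1) / 2 := by
  have hlt : ∀ i ∈ S, ∀ j ∈ S, i < j → (i - a) / 2 < (j - a) / 2 := by
    intro i hi j hj hij
    have : i + 1 ≠ j := fun h => hgap i hi (h ▸ hj)
    have := hS i hi
    omega
  calc #S ≤ #(range ((b - a + 1) / 2)) := by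
        refine card_le_card_of_injOn (fun i => (i - a) / 2) (fun i hi => ?_) fun i hi j hj h => ?_
        · have := hS i hi
          simp only [coe_range, Set.mem_Iio]
          omega
        · rcases lt_trichotomy i j with hij | hij | hij
          · exact absurd h (hlt i hi j hj hij).ne
          · exact hij
          · exact absurd h (hlt j hj i hi hij).ne'
    _ = (b - a + 1) / 2 := card_range _

lemma card_filter_even_range (r : ℕ) : #{i ∈ range r | Even i} = (r + 1) / 2 := by
  induction r with
  | zero => rfl
  | succ r ih =>
    rw [range_add_one, filter_insert]
    split_ifs with h
    · rw [card_insert_of_notMem (by simp), ih]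
      have := Nat.even_iff.mp h
      omega
    · rw [ih]
      have := Nat.not_even_iff.mp h
      omega

lemma card_filter_odd_range (r : ℕ) : #{i ∈ range r | Odd i} = r / 2 := by
  have := card_filter_add_card_filter_not (s := range r) (fun i => Even i)
  simp only [Nat.not_even_iff_odd, card_range, card_filter_even_range] at this
  omega

namespace SimpleGraph

variable {W : Type*} {H : SimpleGraph W}

lemma Subgraph.IsMatching.eq_of_mem_edgeSet {M : H.Subgraph} (hM : M.IsMatching)
    {e f : Sym2 W} (he : e ∈ M.edgeSet) (hf : f ∈ M.edgeSet) {v : W} (hve : v ∈ e)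
    (hvf : v ∈ f) : e = f := by
  obtain ⟨a, rfl⟩ := Sym2.mem_iff_exists.mp hve
  obtain ⟨b, rfl⟩ := Sym2.mem_iff_exists.mp hvf
  rw [hM.eq_of_adj_left (M.mem_edgeSet.mp he) (M.mem_edgeSet.mp hf)]

lemma exists_isMatching_edgeSet_eq {S : Set (Sym2 W)} (hS : S ⊆ H.edgeSet)
    (hdisj : ∀ e ∈ S, ∀ f ∈ S, ∀ v ∈ e, v ∈ f → e = f) :
    ∃ M : H.Subgraph, M.IsMatching ∧ M.edgeSet = S := by
  let M : H.Subgraph :=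
    { verts := {v | ∃ e ∈ S, v ∈ e}
      Adj := fun u v => s(u, v) ∈ S
      adj_sub := fun h => hS h
      edge_vert := fun h => ⟨_, h, Sym2.mem_mk_left _ _⟩
      symm := ⟨fun u v h => by rwa [Sym2.eq_swap]⟩ }
  refine ⟨M, ?_, by ext ⟨u, v⟩; rfl⟩
  rintro v ⟨e, he, hve⟩
  obtain ⟨w, rfl⟩ := Sym2.mem_iff_exists.mp hve
  exact ⟨w, he, fun w' hw' =>
    Sym2.congr_right.mp (hdisj _ hw' _ he v (Sym2.mem_mk_left _ _) hve)⟩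

end SimpleGraph

section MatchingNumber

variable {V : Type*} {G : SimpleGraph V}

lemma matchingNumber_eq_of_isGreatest {N : ℕ}
    (h : IsGreatest {n | ∃ M : G.Subgraph, M.IsMatching ∧ M.edgeSet.ncard = n} N) :
    matchingNumber G = N :=
  h.csSup_eq

variable [Finite V]

lemma bddAbove_ncard_matchings :
    BddAbove {n | ∃ M : G.Subgraph, M.IsMatching ∧ M.edgeSet.ncard = n} := by
  refine ⟨G.edgeSet.ncard, ?_⟩
  rintro _ ⟨M, -, rfl⟩
  exact Set.ncard_le_ncard M.edgeSet_subset (Set.toFinite _)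

lemma exists_isMatching_ncard_eq_matchingNumber :
    ∃ M : G.Subgraph, M.IsMatching ∧ M.edgeSet.ncard = matchingNumber G := by
  have hne : {n | ∃ M : G.Subgraph, M.IsMatching ∧ M.edgeSet.ncard = n}.Nonempty :=
    ⟨_, ⊥, fun _ hv => hv.elim, rfl⟩
  exact Nat.sSup_mem hne bddAbove_ncard_matchings

lemma SimpleGraph.Subgraph.IsMatching.ncard_le_matchingNumber {M : G.Subgraph}
    (hM : M.IsMatching) : M.edgeSet.ncard ≤ matchingNumber G :=
  le_csSup bddAbove_ncard_matchings ⟨M, hM, rfl⟩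

end MatchingNumber

namespace SimpleGraph

variable {V : Type*} [LinearOrder V] {G : SimpleGraph V}

abbrev OrdEdge (G : SimpleGraph V) := {e : V × V // e.1 < e.2 ∧ G.Adj e.1 e.2}

def OrdEdge.toSym2 (e : G.OrdEdge) : Sym2 V := s(e.1.1, e.1.2)

lemma OrdEdge.toSym2_injective : Function.Injective (OrdEdge.toSym2 (G := G)) := by
  intro e f h
  rcases Sym2.eq_iff.mp h with ⟨h1, h2⟩ | ⟨h1, h2⟩
  · exact Subtype.ext (Prod.ext h1 h2)
  · exact absurd ((e.2.1.trans_eq h2).trans (f.2.1.trans_eq h1.symm)) (lt_irrefl _)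

lemma OrdEdge.range_toSym2 : Set.range (OrdEdge.toSym2 (G := G)) = G.edgeSet := by
  ext z
  induction z with | _ a b => ?_
  refine ⟨fun ⟨e, he⟩ => he ▸ e.2.2, fun h => ?_⟩
  rcases lt_or_gt_of_ne (G.ne_of_adj h) with hab | hba
  · exact ⟨⟨(a, b), hab, h⟩, rfl⟩
  · exact ⟨⟨(b, a), hba, h.symm⟩, Sym2.eq_swap⟩

lemma OrdEdge.ncard_preimage_toSym2 {s : Set (Sym2 V)} (hs : s ⊆ G.edgeSet) :
    (OrdEdge.toSym2 (G := G) ⁻¹' s).ncard = s.ncard :=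
  Set.ncard_preimage_of_injective_subset_range OrdEdge.toSym2_injective
    (by rwa [OrdEdge.range_toSym2])

lemma ncard_edgeSet_eq_natCard_ordEdge : G.edgeSet.ncard = Nat.card G.OrdEdge := by
  rw [← OrdEdge.ncard_preimage_toSym2 subset_rfl, ← OrdEdge.range_toSym2, Set.preimage_range,
    Set.ncard_univ]

end SimpleGraph

section Subdivision

open SimpleGraph

variable {V : Type*} [LinearOrder V] {G : SimpleGraph V} {k i j : ℕ} {e f : G.OrdEdge}

/-- The path replacing `e` in `subdivision G k` has the vertices `subdivVert k e i` for `i ≤ k`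
and the edges `subdivEdge k e i` for `i < k`. -/
def subdivVert (k : ℕ) (e : G.OrdEdge) (i : ℕ) : V ⊕ (G.OrdEdge × Fin (k - 1)) :=
  if h : 0 < i ∧ i < k then .inr (e, ⟨i - 1, by omega⟩)
  else if i = 0 then .inl e.1.1 else .inl e.1.2

def subdivEdge (k : ℕ) (e : G.OrdEdge) (i : ℕ) : Sym2 (V ⊕ (G.OrdEdge × Fin (k - 1))) :=
  s(subdivVert k e i, subdivVert k e (i + 1))

lemma subdivVert_zero : subdivVert k e 0 = .inl e.1.1 := by
  simp [subdivVert]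

lemma subdivVert_self (hk : 0 < k) : subdivVert k e k = .inl e.1.2 := by
  simp [subdivVert, hk.ne']

lemma subdivVert_eq_inr_iff {t : Fin (k - 1)} :
    subdivVert k e i = .inr (f, t) ↔ e = f ∧ i = t.val + 1 := by
  unfold subdivVert
  split_ifs with h h0
  · simp only [Sum.inr.injEq, Prod.mk.injEq, Fin.ext_iff]
    exact and_congr_right fun _ => by omega
  all_goals
    simp only [false_iff]
    have := t.2
    omega

lemma subdivVert_succ_val (t : Fin (k - 1)) : subdivVert k e (t.val + 1) = .inr (e, t) :=
  subdivVert_eq_inr_iff.mpr ⟨rfl, rfl⟩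

lemma subdivVert_eq_inl {x : V} (hi : i ≤ k) (h : subdivVert k e i = .inl x) :
    (i = 0 ∧ x = e.1.1) ∨ (i = k ∧ x = e.1.2) := by
  unfold subdivVert at h
  split_ifs at h with h1 h0
  · exact .inl ⟨h0, (Sum.inl.inj h).symm⟩
  · exact .inr ⟨by omega, (Sum.inl.inj h).symm⟩

lemma subdivVert_injOn : Set.InjOn (subdivVert k e) (Set.Iic k) := by
  intro i hi j hj h
  rcases hv : subdivVert k e i with x | ⟨g, t⟩
  · have hne : e.1.1 ≠ e.1.2 := e.2.1.ne
    rcases subdivVert_eq_inl hi hv with ⟨rfl, rfl⟩ | ⟨rfl, rfl⟩ <;>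
      rcases subdivVert_eq_inl hj (h ▸ hv) with ⟨rfl, h'⟩ | ⟨rfl, h'⟩ <;>
      first | rfl | exact absurd h' (by simpa [eq_comm] using hne)
  · have hi' := (subdivVert_eq_inr_iff.mp hv).2
    have hj' := (subdivVert_eq_inr_iff.mp (h ▸ hv)).2
    omega

lemma subdivision_adj_subdivVert (hi : i < k) :
    (subdivision G k).Adj (subdivVert k e i) (subdivVert k e (i + 1)) := by
  unfold subdivVert
  split_ifs <;> simp only [subdivision, true_and, and_true] <;>
    first | contradiction | omega | exact ⟨by omega, e.2.2⟩

lemma exists_subdivEdge_eq_of_adj_inr {t : Fin (k - 1)} {v : V ⊕ (G.OrdEdge × Fin (k - 1))}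
    (h : (subdivision G k).Adj (.inr (e, t)) v) :
    ∃ i < k, subdivEdge k e i = s(.inr (e, t), v) := by
  have ht := t.2
  rcases v with y | ⟨f, s⟩
  · rcases h with ⟨ht0, rfl⟩ | ⟨htk, rfl⟩
    · have hv : subdivVert k e 1 = .inr (e, t) := subdivVert_eq_inr_iff.mpr ⟨rfl, by omega⟩
      exact ⟨0, by omega, by rw [subdivEdge, subdivVert_zero, zero_add, hv, Sym2.eq_swap]⟩
    · have hv : subdivVert k e (k - 1) = .inr (e, t) :=
        subdivVert_eq_inr_iff.mpr ⟨rfl, by omega⟩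
      refine ⟨k - 1, by omega, ?_⟩
      rw [subdivEdge, Nat.sub_add_cancel (by omega), subdivVert_self (by omega), hv]
  · obtain ⟨rfl, hts | hst⟩ := h
    · refine ⟨t.val + 1, by omega, ?_⟩
      rw [subdivEdge, subdivVert_succ_val, hts, subdivVert_succ_val]
    · refine ⟨s.val + 1, by omega, ?_⟩
      rw [subdivEdge, subdivVert_succ_val, hst, subdivVert_succ_val, Sym2.eq_swap]

lemma exists_subdivEdge_eq_of_adj {u v : V ⊕ (G.OrdEdge × Fin (k - 1))}
    (h : (subdivision G k).Adj u v) : ∃ e, ∃ i < k, subdivEdge k e i = s(u, v) := by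
  rcases u with x | ⟨e, t⟩
  · rcases v with y | ⟨f, s⟩
    · obtain ⟨rfl, hxy⟩ := h
      rcases lt_or_gt_of_ne (G.ne_of_adj hxy) with hlt | hgt
      · refine ⟨⟨(x, y), hlt, hxy⟩, 0, one_pos, ?_⟩
        rw [subdivEdge, zero_add, subdivVert_zero, subdivVert_self one_pos]
      · refine ⟨⟨(y, x), hgt, hxy.symm⟩, 0, one_pos, ?_⟩
        rw [subdivEdge, zero_add, subdivVert_zero, subdivVert_self one_pos, Sym2.eq_swap]
    · obtain ⟨i, hi, hs⟩ := exists_subdivEdge_eq_of_adj_inr h.symm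
      exact ⟨f, i, hi, hs.trans Sym2.eq_swap⟩
  · exact ⟨e, exists_subdivEdge_eq_of_adj_inr h⟩

lemma inr_mem_subdivEdge {t : Fin (k - 1)} (h : .inr (f, t) ∈ subdivEdge k e i) :
    e = f ∧ (i = t.val ∨ i = t.val + 1) := by
  rcases Sym2.mem_iff.mp h with h | h
  · obtain ⟨hef, hi⟩ := subdivVert_eq_inr_iff.mp h.symm
    exact ⟨hef, .inr hi⟩
  · obtain ⟨hef, hi⟩ := subdivVert_eq_inr_iff.mp h.symm
    exact ⟨hef, .inl (by omega)⟩

lemma inl_mem_subdivEdge {x : V} (hi : i < k) (h : .inl x ∈ subdivEdge k e i) :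
    (i = 0 ∧ x = e.1.1) ∨ (i + 1 = k ∧ x = e.1.2) := by
  rcases Sym2.mem_iff.mp h with h | h
  · rcases subdivVert_eq_inl hi.le h.symm with h' | h' <;> [exact .inl h'; omega]
  · rcases subdivVert_eq_inl hi h.symm with h' | h' <;> [omega; exact .inr h']

lemma inl_mem_subdivEdge_of_mem_toSym2 (hk : 0 < k) {x : V} (hx : x ∈ e.toSym2) :
    .inl x ∈ subdivEdge k e 0 ∨ .inl x ∈ subdivEdge k e (k - 1) := by
  rcases Sym2.mem_iff.mp hx with rfl | rfl
  · refine .inl ?_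
    rw [subdivEdge, subdivVert_zero]
    exact Sym2.mem_mk_left _ _
  · refine .inr ?_
    rw [subdivEdge, Nat.sub_add_cancel hk, subdivVert_self hk]
    exact Sym2.mem_mk_right _ _

lemma eq_and_eq_of_subdivEdge_eq (hi : i < k) (hj : j < k)
    (h : subdivEdge k e i = subdivEdge k f j) : e = f ∧ i = j := by
  have hef : e = f := by
    rcases Nat.lt_or_ge 1 k with hk | hk
    · obtain ⟨t, ht⟩ : ∃ t : Fin (k - 1), .inr (e, t) ∈ subdivEdge k e i := by
        rcases Nat.eq_zero_or_pos i with rfl | hpos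
        · exact ⟨⟨0, by omega⟩, Sym2.mem_iff.mpr (.inr (subdivVert_succ_val _).symm)⟩
        · have hv : subdivVert k e i = .inr (e, ⟨i - 1, by omega⟩) :=
            subdivVert_eq_inr_iff.mpr ⟨rfl, by simp only; omega⟩
          exact ⟨_, Sym2.mem_iff.mpr (.inl hv.symm)⟩
      rw [h] at ht
      exact (inr_mem_subdivEdge ht).1.symm
    · obtain ⟨rfl, rfl, rfl⟩ : k = 1 ∧ i = 0 ∧ j = 0 := by omega
      rw [subdivEdge, subdivEdge, zero_add, subdivVert_zero, subdivVert_zero,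
        subdivVert_self one_pos, subdivVert_self one_pos] at h
      exact OrdEdge.toSym2_injective ((Sym2.map.injective Sum.inl_injective) h)
  subst hef
  refine ⟨rfl, ?_⟩
  have hmem {a : ℕ} (ha : a < k) : a ∈ Set.Iic k ∧ a + 1 ∈ Set.Iic k :=
    ⟨Set.mem_Iic.mpr ha.le, Set.mem_Iic.mpr ha⟩
  rcases Sym2.eq_iff.mp h with ⟨h1, -⟩ | ⟨h1, h2⟩
  · exact subdivVert_injOn (hmem hi).1 (hmem hj).1 h1
  · have := subdivVert_injOn (hmem hi).1 (hmem hj).2 h1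
    have := subdivVert_injOn (hmem hi).2 (hmem hj).1 h2
    omega

open Classical in
lemma ncard_edgeSet_subdivision_eq_sum [Fintype G.OrdEdge] (M : (subdivision G k).Subgraph) :
    M.edgeSet.ncard = ∑ e : G.OrdEdge, #{i ∈ range k | subdivEdge k e i ∈ M.edgeSet} := by
  set A : Finset (Σ _ : G.OrdEdge, ℕ) :=
    univ.sigma fun e => {i ∈ range k | subdivEdge k e i ∈ M.edgeSet}
  have hA : M.edgeSet = (fun p : Σ _ : G.OrdEdge, ℕ => subdivEdge k p.1 p.2) '' A := by
    ext z
    induction z with | _ u v => ?_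
    refine ⟨fun huv => ?_, ?_⟩
    · obtain ⟨e, i, hi, he⟩ := exists_subdivEdge_eq_of_adj (M.adj_sub huv)
      exact ⟨⟨e, i⟩, by simp [A, hi, he, huv], he⟩
    · rintro ⟨⟨e, i⟩, hp, hz⟩
      simp only [A, coe_sigma, Set.mem_sigma_iff, coe_filter] at hp
      exact hz ▸ hp.2.2
  have hinj : Set.InjOn (fun p : Σ _ : G.OrdEdge, ℕ => subdivEdge k p.1 p.2) A := by
    rintro ⟨e, i⟩ hp ⟨f, j⟩ hq h
    simp only [A, coe_sigma, Set.mem_sigma_iff, coe_filter, mem_range] at hp hq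
    obtain ⟨rfl, rfl⟩ := eq_and_eq_of_subdivEdge_eq hp.2.1 hq.2.1 h
    rfl
  rw [congrArg Set.ncard hA, hinj.ncard_image, Set.ncard_coe_finset, card_sigma]

section Upper

variable {M : (subdivision G k).Subgraph}

lemma subdivEdge_succ_notMem_edgeSet (hM : M.IsMatching) (hi : i + 1 < k)
    (h : subdivEdge k e i ∈ M.edgeSet) : subdivEdge k e (i + 1) ∉ M.edgeSet := fun h' =>
  absurd (eq_and_eq_of_subdivEdge_eq (by omega) hi
    (hM.eq_of_mem_edgeSet h h' (Sym2.mem_mk_right _ _) (Sym2.mem_mk_left _ _))).2 (by omega)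

open Classical in
lemma card_subdivEdge_mem_edgeSet_le (hk : Odd k) (hM : M.IsMatching) (e : G.OrdEdge) :
    #{i ∈ range k | subdivEdge k e i ∈ M.edgeSet} ≤ k / 2 +
      if subdivEdge k e 0 ∈ M.edgeSet ∧ subdivEdge k e (k - 1) ∈ M.edgeSet then 1 else 0 := by
  set T := {i ∈ range k | subdivEdge k e i ∈ M.edgeSet}
  have hT (i : ℕ) : i ∈ T ↔ i < k ∧ subdivEdge k e i ∈ M.edgeSet := by simp [T]
  have hgap : ∀ i ∈ T, i + 1 ∉ T := fun i hi hi' => by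
    rw [hT] at hi hi'
    exact subdivEdge_succ_notMem_edgeSet hM hi'.1 hi.2 hi'.2
  have hlt : ∀ i ∈ T, i < k := fun i hi => ((hT i).mp hi).1
  have hk2 := Nat.odd_iff.mp hk
  split_ifs with hends
  · have := T.card_le_half_of_succ_notMem (a := 0) (fun i hi => ⟨i.zero_le, hlt i hi⟩) hgap
    omega
  rcases not_and_or.mp hends with h0 | hlast
  · have := T.card_le_half_of_succ_notMem (a := 1) (b := k) (fun i hi => ⟨?_, hlt i hi⟩) hgap
    · omega
    · rcases Nat.eq_zero_or_pos i with rfl | hpos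
      · exact absurd ((hT 0).mp hi).2 h0
      · exact hpos
  · have :=
      T.card_le_half_of_succ_notMem (a := 0) (b := k - 1) (fun i hi => ⟨i.zero_le, ?_⟩) hgap
    · omega
    · have hik := (hT i).mp hi
      exact lt_of_le_of_ne (by omega) fun hi' => hlast (hi' ▸ hik.2)

theorem ncard_le_of_isMatching_subdivision [Finite V] (hk : Odd k) (hM : M.IsMatching) :
    M.edgeSet.ncard ≤ G.edgeSet.ncard * (k / 2) + matchingNumber G := by
  classical
  have := Fintype.ofFinite G.OrdEdge
  have hk0 : 0 < k := hk.pos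
  set D : Finset G.OrdEdge :=
    {e | subdivEdge k e 0 ∈ M.edgeSet ∧ subdivEdge k e (k - 1) ∈ M.edgeSet}
  have hend {e : G.OrdEdge} (he : e ∈ D) {x : V} (hx : x ∈ e.toSym2) :
      ∃ i < k, subdivEdge k e i ∈ M.edgeSet ∧ .inl x ∈ subdivEdge k e i := by
    simp only [D, mem_filter, mem_univ, true_and] at he
    rcases inl_mem_subdivEdge_of_mem_toSym2 hk0 hx with h | h
    exacts [⟨0, hk0, he.1, h⟩, ⟨k - 1, by omega, he.2, h⟩]
  have hD : #D ≤ matchingNumber G := by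
    obtain ⟨M', hM', hM'D⟩ :=
      exists_isMatching_edgeSet_eq (S := OrdEdge.toSym2 '' (D : Set G.OrdEdge))
        (by rintro _ ⟨e, -, rfl⟩; exact e.2.2) (by
          rintro _ ⟨e, he, rfl⟩ _ ⟨f, hf, rfl⟩ x hxe hxf
          obtain ⟨i, hi, hiM, hxi⟩ := hend he hxe
          obtain ⟨j, hj, hjM, hxj⟩ := hend hf hxf
          rw [(eq_and_eq_of_subdivEdge_eq hi hj (hM.eq_of_mem_edgeSet hiM hjM hxi hxj)).1])
    calc #D = M'.edgeSet.ncard := by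
          rw [hM'D, (OrdEdge.toSym2_injective (G := G)).injOn.ncard_image, Set.ncard_coe_finset]
      _ ≤ matchingNumber G := hM'.ncard_le_matchingNumber
  calc M.edgeSet.ncard = ∑ e, #{i ∈ range k | subdivEdge k e i ∈ M.edgeSet} :=
        ncard_edgeSet_subdivision_eq_sum M
    _ ≤ ∑ e, (k / 2 + if subdivEdge k e 0 ∈ M.edgeSet ∧ subdivEdge k e (k - 1) ∈ M.edgeSet
          then 1 else 0) :=
        sum_le_sum fun e _ => card_subdivEdge_mem_edgeSet_le hk hM e
    _ = G.edgeSet.ncard * (k / 2) + #D := by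
        rw [sum_add_distrib, sum_const, card_univ, smul_eq_mul, sum_boole, Nat.cast_id,
          ncard_edgeSet_eq_natCard_ordEdge, Nat.card_eq_fintype_card]
    _ ≤ G.edgeSet.ncard * (k / 2) + matchingNumber G := Nat.add_le_add_left hD _

end Upper

section Lower

variable {D : Set G.OrdEdge}

variable (D) in
def liftMatchingEdges (k : ℕ) : Set (Sym2 (V ⊕ (G.OrdEdge × Fin (k - 1)))) :=
  {z | ∃ e i, i < k ∧ (Even i ↔ e ∈ D) ∧ subdivEdge k e i = z}

lemma subdivEdge_mem_liftMatchingEdges_iff (hi : i < k) :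
    subdivEdge k e i ∈ liftMatchingEdges D k ↔ (Even i ↔ e ∈ D) := by
  refine ⟨fun ⟨f, j, hj, hfj, h⟩ => ?_, fun h => ⟨e, i, hi, h, rfl⟩⟩
  obtain ⟨rfl, rfl⟩ := eq_and_eq_of_subdivEdge_eq hj hi h
  exact hfj

lemma eq_of_mem_liftMatchingEdges (hk : Odd k)
    (hD : ∀ e ∈ D, ∀ f ∈ D, ∀ x ∈ e.toSym2, x ∈ f.toSym2 → e = f)
    {z z' : Sym2 (V ⊕ (G.OrdEdge × Fin (k - 1)))} (hz : z ∈ liftMatchingEdges D k)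
    (hz' : z' ∈ liftMatchingEdges D k) {w : V ⊕ (G.OrdEdge × Fin (k - 1))} (hwz : w ∈ z)
    (hwz' : w ∈ z') : z = z' := by
  obtain ⟨e, i, hi, hei, rfl⟩ := hz
  obtain ⟨f, j, hj, hfj, rfl⟩ := hz'
  have hk2 := Nat.odd_iff.mp hk
  rcases w with x | ⟨g, t⟩
  · -- an original vertex lies only on end edges, and for odd `k` both sit at even positions
    have hend {e : G.OrdEdge} {i : ℕ} (hi : i < k) (hei : Even i ↔ e ∈ D)
        (hw : .inl x ∈ subdivEdge k e i) : e ∈ D ∧ x ∈ e.toSym2 := by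
      rcases inl_mem_subdivEdge hi hw with ⟨rfl, rfl⟩ | ⟨hik, rfl⟩
      · exact ⟨hei.mp Even.zero, Sym2.mem_mk_left _ _⟩
      · exact ⟨hei.mp (Nat.even_iff.mpr (by omega)), Sym2.mem_mk_right _ _⟩
    obtain ⟨he, hxe⟩ := hend hi hei hwz
    obtain ⟨hf, hxf⟩ := hend hj hfj hwz'
    obtain rfl := hD e he f hf x hxe hxf
    have hne : e.1.1 ≠ e.1.2 := e.2.1.ne
    rcases inl_mem_subdivEdge hi hwz with ⟨hi', rfl⟩ | ⟨hi', rfl⟩ <;>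
      rcases inl_mem_subdivEdge hj hwz' with ⟨hj', h⟩ | ⟨hj', h⟩ <;>
      first | rw [show i = j by omega] | exact absurd h (by simpa [eq_comm] using hne)
  · obtain ⟨rfl, hit⟩ := inr_mem_subdivEdge hwz
    obtain ⟨rfl, hjt⟩ := inr_mem_subdivEdge hwz'
    have hij : i % 2 = 0 ↔ j % 2 = 0 := by rw [← Nat.even_iff, ← Nat.even_iff, hei, hfj]
    rw [show i = j by omega]

open Classical in
lemma card_filter_subdivEdge_mem_liftMatchingEdges (hk : Odd k) (e : G.OrdEdge) :
    #{i ∈ range k | subdivEdge k e i ∈ liftMatchingEdges D k} =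
      k / 2 + if e ∈ D then 1 else 0 := by
  have hk2 := Nat.odd_iff.mp hk
  rw [filter_congr fun i hi => subdivEdge_mem_liftMatchingEdges_iff (mem_range.mp hi)]
  split_ifs with he
  · simp only [he, iff_true, card_filter_even_range]
    omega
  · simp only [he, iff_false, Nat.not_even_iff_odd, card_filter_odd_range, add_zero]

end Lower

theorem exists_isMatching_subdivision [Finite V] (hk : Odd k) {M' : G.Subgraph}
    (hM' : M'.IsMatching) : ∃ M : (subdivision G k).Subgraph,
      M.IsMatching ∧ M.edgeSet.ncard = G.edgeSet.ncard * (k / 2) + M'.edgeSet.ncard := by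
  classical
  have := Fintype.ofFinite G.OrdEdge
  set D : Set G.OrdEdge := OrdEdge.toSym2 ⁻¹' M'.edgeSet
  have hD : ∀ e ∈ D, ∀ f ∈ D, ∀ x ∈ e.toSym2, x ∈ f.toSym2 → e = f :=
    fun e he f hf x hxe hxf =>
      OrdEdge.toSym2_injective (G := G) (hM'.eq_of_mem_edgeSet he hf hxe hxf)
  obtain ⟨M, hM, hMD⟩ :=
    exists_isMatching_edgeSet_eq (H := subdivision G k) (S := liftMatchingEdges D k)
      (by rintro _ ⟨e, i, hi, -, rfl⟩; exact subdivision_adj_subdivVert hi)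
      fun z hz z' hz' w hwz hwz' => eq_of_mem_liftMatchingEdges hk hD hz hz' hwz hwz'
  refine ⟨M, hM, ?_⟩
  rw [ncard_edgeSet_subdivision_eq_sum, hMD]
  simp only [card_filter_subdivEdge_mem_liftMatchingEdges hk, sum_add_distrib, sum_const,
    card_univ, smul_eq_mul, sum_boole, Nat.cast_id]
  rw [ncard_edgeSet_eq_natCard_ordEdge, Nat.card_eq_fintype_card, ← Set.ncard_coe_finset,
    coe_filter_univ, Set.ofPred_mem_eq, OrdEdge.ncard_preimage_toSym2 M'.edgeSet_subset]

theorem matchingNumber_subdivision_of_odd [Finite V] (hk : Odd k) :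
    matchingNumber (subdivision G k) = G.edgeSet.ncard * (k / 2) + matchingNumber G := by
  obtain ⟨M', hM', hM'G⟩ := exists_isMatching_ncard_eq_matchingNumber (G := G)
  obtain ⟨M, hM, hcard⟩ := exists_isMatching_subdivision hk hM'
  refine matchingNumber_eq_of_isGreatest ⟨⟨M, hM, hcard.trans (by rw [hM'G])⟩, ?_⟩
  rintro _ ⟨M, hM, rfl⟩
  exact ncard_le_of_isMatching_subdivision hk hM

end Subdivision

section CompleteBipartite

open SimpleGraph

variable {m n : ℕ}

lemma completeBipartite_adj {x y : Fin (m + n)} :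
    (completeBipartite m n).Adj x y ↔
      (x.val < m ∧ m ≤ y.val) ∨ (y.val < m ∧ m ≤ x.val) := by
  simp only [completeBipartite, fromRel_adj]
  refine ⟨And.right, fun h => ⟨fun hxy => ?_, h⟩⟩
  subst hxy
  omega

lemma completeBipartite_ordEdge_mem_parts (e : (completeBipartite m n).OrdEdge) :
    e.1.1.val < m ∧ m ≤ e.1.2.val := by
  have hlt : e.1.1.val < e.1.2.val := e.2.1
  rcases completeBipartite_adj.mp e.2.2 with h | h
  · exact h
  · omega

lemma ncard_edgeSet_completeBipartite : (completeBipartite m n).edgeSet.ncard = m * n :=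
  calc (completeBipartite m n).edgeSet.ncard = Nat.card (completeBipartite m n).OrdEdge :=
        ncard_edgeSet_eq_natCard_ordEdge
    _ = Nat.card (Fin m × Fin n) := Nat.card_congr
      { toFun := fun e => (⟨e.1.1, (completeBipartite_ordEdge_mem_parts e).1⟩, ⟨e.1.2 - m, by
          have := (completeBipartite_ordEdge_mem_parts e).2
          omega⟩)
        invFun := fun p => ⟨(Fin.castAdd n p.1, Fin.natAdd m p.2), by simp [Fin.lt_def]; omega,
          completeBipartite_adj.mpr (.inl ⟨by simp, by simp⟩)⟩
        left_inv := fun e => by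
          have := (completeBipartite_ordEdge_mem_parts e).2
          ext <;> simp
          omega
        right_inv := fun p => by ext <;> simp }
    _ = m * n := by simp

lemma exists_isMatching_completeBipartite (h : m ≤ n) :
    ∃ M : (completeBipartite m n).Subgraph, M.IsMatching ∧ M.edgeSet.ncard = m := by
  let f : Fin m → Sym2 (Fin (m + n)) := fun i => s(Fin.castAdd n i, ⟨m + i, by omega⟩)
  have hval {i : Fin m} {v : Fin (m + n)} (hv : v ∈ f i) : v.val = i ∨ v.val = m + i := by
    rcases Sym2.mem_iff.mp hv with rfl | rfl <;> simp
  have hf {i j : Fin m} {v : Fin (m + n)} (hvi : v ∈ f i) (hvj : v ∈ f j) : i = j := by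
    have := i.2
    have := j.2
    ext
    rcases hval hvi with h | h <;> rcases hval hvj with h' | h' <;> omega
  obtain ⟨M, hM, hMf⟩ := exists_isMatching_edgeSet_eq (H := completeBipartite m n)
    (S := Set.range f)
    (by
      rintro _ ⟨i, rfl⟩
      exact completeBipartite_adj.mpr (.inl ⟨by simp, by simp⟩))
    (by
      rintro _ ⟨i, rfl⟩ _ ⟨j, rfl⟩ v hvi hvj
      rw [hf hvi hvj])
  refine ⟨M, hM, ?_⟩
  rw [hMf, Set.ncard_range_of_injective (f := f) fun i j hij =>
    hf (Sym2.mem_mk_left _ _) (hij ▸ Sym2.mem_mk_left _ _), Nat.card_fin]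

lemma ncard_le_of_isMatching_completeBipartite {M : (completeBipartite m n).Subgraph}
    (hM : M.IsMatching) : M.edgeSet.ncard ≤ m := by
  let left (e : (completeBipartite m n).OrdEdge) : Fin m :=
    ⟨e.1.1, (completeBipartite_ordEdge_mem_parts e).1⟩
  have hinj : Set.InjOn left (OrdEdge.toSym2 ⁻¹' M.edgeSet) := fun e he f hf hef => by
    have hx : e.1.1 = f.1.1 := Fin.ext (Fin.mk.inj hef)
    refine OrdEdge.toSym2_injective (hM.eq_of_mem_edgeSet he hf (Sym2.mem_mk_left _ _) ?_)
    rw [hx]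
    exact Sym2.mem_mk_left _ _
  calc M.edgeSet.ncard = (OrdEdge.toSym2 ⁻¹' M.edgeSet).ncard :=
        (OrdEdge.ncard_preimage_toSym2 M.edgeSet_subset).symm
    _ ≤ (Set.univ : Set (Fin m)).ncard :=
        Set.ncard_le_ncard_of_injOn left (fun _ _ => Set.mem_univ _) hinj
    _ = m := by rw [Set.ncard_univ, Nat.card_fin]

lemma matchingNumber_completeBipartite (h : m ≤ n) :
    matchingNumber (completeBipartite m n) = m := by
  obtain ⟨M, hM, hcard⟩ := exists_isMatching_completeBipartite h
  refine matchingNumber_eq_of_isGreatest ⟨⟨M, hM, hcard⟩, ?_⟩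
  rintro _ ⟨M, hM, rfl⟩
  exact ncard_le_of_isMatching_completeBipartite hM

end CompleteBipartite

theorem stmt13_general (m n k : ℕ) (hmn : m < n) (hk : Odd k) :
    matchingNumber (subdivision (completeBipartite m n) k)
      = m * ((k + 1) / 2) + m * (m - 1) * ((k - 1) / 2) + m * (n - m) * (k / 2) := by
  rw [matchingNumber_subdivision_of_odd hk, ncard_edgeSet_completeBipartite,
    matchingNumber_completeBipartite hmn.le]
  obtain ⟨t, rfl⟩ := hk
  obtain ⟨d, rfl⟩ := Nat.exists_eq_add_of_le hmn.le
  rw [show (2 * t + 1 + 1) / 2 = t + 1 by omega, show (2 * t + 1 - 1) / 2 = t by omega,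
    show (2 * t + 1) / 2 = t by omega, Nat.add_sub_cancel_left]
  rcases m with _ | m
  · simp
  · rw [Nat.add_sub_cancel]
    ring

theorem stmt13 (m n k : ℕ) (hm : 1 ≤ m) (hmn : m < n) (hk : Odd k) :
    matchingNumber (subdivision (completeBipartite m n) k)
      = m * ((k + 1) / 2) + m * (m - 1) * ((k - 1) / 2) + m * (n - m) * (k / 2) :=
  stmt13_general m n k hmn hk
end
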